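/- Let A be a set of ordinals and let γ < β be ordinals. If A_γ has a maximum element m, then a < m for every a ∈ A_β. In particular, if both A_γ and A_β have maximum elements, then max A_γ > max A_β whenever A_β ≠ ∅. -/

import Mathlib

open Set

/-- `x` is a limit point of the set `B` of ordinals: `x` is a limit ordinal and
`B ∩ x` is unbounded in `x`. -/
def limitPts (B : Set Ordinal) : Set Ordinal :=
  {x : Ordinal | Order.IsSuccLimit x ∧ ∀ y < x, ∃ b ∈ B, y < b ∧ b < x}

/-- `CBge A α` is `A_{≥α}`, the set of elements of `A` of Cantor–Bendixson rank `≥ α`: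
`A_{≥α} = A \ ⋃_{β<α} A_β` where `A_β = A_{≥β} \ (A_{≥β})*`. -/
noncomputable def CBge (A : Set Ordinal) : Ordinal → Set Ordinal :=
  Ordinal.lt_wf.fix (C := fun _ => Set Ordinal) fun α IH =>
    A \ ⋃ (β : Ordinal), ⋃ (h : β < α), (IH β h \ limitPts (IH β h))

/-- `CBpart A β` is `A_β`, the set of elements of `A` of Cantor–Bendixson rank exactly `β`. -/
noncomputable def CBpart (A : Set Ordinal) (β : Ordinal) : Set Ordinal :=
  CBge A β \ limitPts (CBge A β)

/-- The set of ω-limits of a set `B` of ordinals: suprema of strictly increasing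
ℕ-indexed sequences of elements of `B`. -/
def omegaLimits (B : Set Ordinal) : Set Ordinal :=
  {l : Ordinal | ∃ f : ℕ → Ordinal, StrictMono f ∧ (∀ n, f n ∈ B) ∧ l = ⨆ n, f n}

/-- `Wpart A β` is `W_β(A)`, the set of ω-limits of `A_β`. -/
noncomputable def Wpart (A : Set Ordinal) (β : Ordinal) : Set Ordinal :=
  omegaLimits (CBpart A β)

/-- `Sseq A β lam` is `S_β^λ(A) = {x ∈ A_β : sup(W_β(A) ∩ λ) < x < λ}`. -/
noncomputable def Sseq (A : Set Ordinal) (β lam : Ordinal) : Set Ordinal :=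
  {x : Ordinal | x ∈ CBpart A β ∧ sSup (Wpart A β ∩ Set.Iio lam) < x ∧ x < lam}

lemma exists_mem_diff_limitPts_mem_Ioo {B : Set Ordinal} {x y : Ordinal}
    (hx : x ∈ limitPts B) (hy : y < x) : ∃ c ∈ B \ limitPts B, c ∈ Ioo y x := by
  obtain ⟨b, hbB, hyb, hbx⟩ := hx.2 y hy
  have hne : (B ∩ Ioo y x).Nonempty := ⟨b, hbB, hyb, hbx⟩
  -- the least element of `B` in `(y, x)` is not a limit point of `B`
  obtain ⟨hcB, hyc, hcx⟩ := csInf_mem hne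
  refine ⟨sInf (B ∩ Ioo y x), ⟨hcB, fun hlim => ?_⟩, hyc, hcx⟩
  obtain ⟨d, hdB, hyd, hdc⟩ := hlim.2 y hyc
  exact (csInf_le' (s := B ∩ Ioo y x) ⟨hdB, hyd, hdc.trans hcx⟩).not_gt hdc

lemma CBge_eq (A : Set Ordinal) (α : Ordinal) :
    CBge A α = A \ ⋃ β < α, CBpart A β := by
  rw [CBge, WellFounded.fix_eq]
  rfl

lemma CBge_antitone (A : Set Ordinal) : Antitone (CBge A) := fun γ β h => by
  simp only [CBge_eq]
  exact sdiff_subset_sdiff_right <| biUnion_subset_biUnion_left fun δ hδ => lt_of_lt_of_le hδ h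

lemma CBge_disjoint_CBpart (A : Set Ordinal) {γ β : Ordinal} (h : γ < β) :
    Disjoint (CBge A β) (CBpart A γ) := by
  rw [CBge_eq]
  exact disjoint_sdiff_left.mono_right (subset_biUnion_of_mem (u := CBpart A) h)

lemma CBge_subset_limitPts (A : Set Ordinal) {γ β : Ordinal} (h : γ < β) :
    CBge A β ⊆ limitPts (CBge A γ) := fun a ha => by
  by_contra hlim
  exact (CBge_disjoint_CBpart A h).notMem_of_mem_left ha ⟨CBge_antitone A h.le ha, hlim⟩

lemma exists_mem_CBpart_mem_Ioo (A : Set Ordinal) {γ β a y : Ordinal} (h : γ < β)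
    (ha : a ∈ CBge A β) (hy : y < a) : ∃ c ∈ CBpart A γ, c ∈ Ioo y a :=
  exists_mem_diff_limitPts_mem_Ioo (CBge_subset_limitPts A h ha) hy

/-- If `γ < β` and `A_γ` has a maximum element `m`, then every element of `A_β`
is strictly below `m`; in particular, if `A_β` also has a maximum element, that maximum is
strictly below `m`. -/
theorem max_CBpart_lt_of_rank_lt (A : Set Ordinal) (γ β : Ordinal) (hγβ : γ < β)
    (m : Ordinal) (hm : m ∈ CBpart A γ) (hmax : ∀ a ∈ CBpart A γ, a ≤ m) :
    (∀ a ∈ CBpart A β, a < m) ∧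
    (∀ m' ∈ CBpart A β, (∀ a ∈ CBpart A β, a ≤ m') → m' < m) := by
  have key : ∀ a ∈ CBpart A β, a < m := by
    intro a ha
    by_contra! hma
    have hne : m ≠ a := fun h => (CBge_disjoint_CBpart A hγβ).notMem_of_mem_left ha.1 (h ▸ hm)
    obtain ⟨c, hc, hmc, -⟩ := exists_mem_CBpart_mem_Ioo A hγβ ha.1 (hma.lt_of_ne hne)
    exact (hmax c hc).not_gt hmc
  exact ⟨key, fun m' hm' _ => key m' hm'⟩
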